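/- Let G and H be finite connected nontrivial simple graphs of order n₁ and n₂ respectively. Then dim_s(G ⊠ H) ≥ max{n₂ · dim_s(G), n₁ · dim_s(H)}. -/

import Mathlib

open SimpleGraph Finset

variable {α β : Type*}

/-- The strong product of two simple graphs: distinct vertices `(a,b)` and `(c,d)` are adjacent
iff (`a = c` or `a ~ c`) and (`b = d` or `b ~ d`). -/
def strongProd (G : SimpleGraph α) (H : SimpleGraph β) : SimpleGraph (α × β) where
  Adj x y := x ≠ y ∧ (x.1 = y.1 ∨ G.Adj x.1 y.1) ∧ (x.2 = y.2 ∨ H.Adj x.2 y.2)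
  symm := by
    refine ⟨?_⟩
    rintro x y ⟨h1, h2, h3⟩
    exact ⟨h1.symm, h2.imp Eq.symm (fun a => a.symm), h3.imp Eq.symm (fun a => a.symm)⟩
  loopless := ⟨fun x h => h.1 rfl⟩

/-- The Cartesian sum (disjunctive product) of two simple graphs. -/
def cartSum (G : SimpleGraph α) (H : SimpleGraph β) : SimpleGraph (α × β) where
  Adj x y := x ≠ y ∧ (G.Adj x.1 y.1 ∨ H.Adj x.2 y.2)
  symm := by
    refine ⟨?_⟩
    rintro x y ⟨h1, h2⟩
    exact ⟨h1.symm, h2.imp (fun a => a.symm) (fun a => a.symm)⟩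
  loopless := ⟨fun x h => h.1 rfl⟩

/-- `u` is maximally distant from `v` in `G`. -/
def MaximallyDistantFrom (G : SimpleGraph α) (u v : α) : Prop :=
  ∀ w, G.Adj u w → G.dist v w ≤ G.dist u v

/-- `u` and `v` are mutually maximally distant in `G`. -/
def MutuallyMaximallyDistant (G : SimpleGraph α) (u v : α) : Prop :=
  MaximallyDistantFrom G u v ∧ MaximallyDistantFrom G v u

/-- The strong resolving graph of `G`. -/
def strongResolvingGraph (G : SimpleGraph α) : SimpleGraph α where
  Adj u v := u ≠ v ∧ MutuallyMaximallyDistant G u v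
  symm := by refine ⟨?_⟩; rintro u v ⟨h1, h2, h3⟩; exact ⟨h1.symm, h3, h2⟩
  loopless := ⟨fun x h => h.1 rfl⟩

/-- A finset of vertices is independent if no two of its (distinct) members are adjacent. -/
def IsIndepFinset (G : SimpleGraph α) (s : Finset α) : Prop :=
  ∀ u ∈ s, ∀ v ∈ s, u ≠ v → ¬ G.Adj u v

/-- The independence number `β(G)`. -/
noncomputable def indepNum (G : SimpleGraph α) [Fintype α] : ℕ :=
  sSup {n | ∃ s : Finset α, IsIndepFinset G s ∧ s.card = n}

/-- `w` strongly resolves `u` and `v` in `G`. -/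
def StronglyResolves (G : SimpleGraph α) (w u v : α) : Prop :=
  G.dist w u = G.dist w v + G.dist v u ∨ G.dist w v = G.dist w u + G.dist u v

/-- A strong metric generator for `G`. -/
def IsStrongMetricGenerator (G : SimpleGraph α) (s : Finset α) : Prop :=
  ∀ u v : α, u ≠ v → ∃ w ∈ s, StronglyResolves G w u v

/-- The strong metric dimension of `G`. -/
noncomputable def sdim (G : SimpleGraph α) [Fintype α] : ℕ :=
  sInf {n | ∃ s : Finset α, IsStrongMetricGenerator G s ∧ s.card = n}

/-!
Every pair `x ≠ y` of `G` lies on a geodesic `u ⋯ x y ⋯ v` whose ends `u, v` are mutually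
maximally distant: push each end outward for as long as the distance to the other end grows.
Distances in `G ⊠ H` are maxima of coordinate distances, so for every `b` the pair `(u, b), (v, b)`
is again mutually maximally distant, and such a pair is strongly resolved only by its own ends.
Hence a strong metric generator of `G ⊠ H` meets each fibre `V(G) × {b}` in a set projecting onto
a strong metric generator of `G`, which gives `n₂ · dim_s(G)` vertices; swapping the factors gives
the other bound.
-/

namespace SimpleGraph

variable {V W : Type*} {G : SimpleGraph V} {G' : SimpleGraph W}

lemma dist_le_one_of_eq_or_adj {u v : V} (h : u = v ∨ G.Adj u v) : G.dist u v ≤ 1 := by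
  rcases h with rfl | h
  · simp
  · exact (dist_eq_one_iff_adj.2 h).le

lemma Connected.exists_adj_dist_add_one_eq (hG : G.Connected) {u v : V} (h : u ≠ v) :
    ∃ w, G.Adj u w ∧ G.dist w v + 1 = G.dist u v := by
  obtain ⟨p, hp⟩ := hG.exists_walk_length_eq_dist u v
  cases p with
  | nil => exact absurd rfl h
  | @cons _ w _ hadj q =>
    refine ⟨w, hadj, le_antisymm ?_ ?_⟩
    · simpa [← hp] using dist_le q
    · have := hG.dist_triangle (u := u) (v := w) (w := v)
      have := dist_le_one_of_eq_or_adj (Or.inr hadj)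
      omega

lemma Connected.exists_eq_or_adj_dist_eq_sub_one (hG : G.Connected) (u v : V) :
    ∃ w, (u = w ∨ G.Adj u w) ∧ G.dist w v = G.dist u v - 1 := by
  by_cases h : u = v
  · exact ⟨u, Or.inl rfl, by simp [h]⟩
  · obtain ⟨w, hadj, hw⟩ := hG.exists_adj_dist_add_one_eq h
    exact ⟨w, Or.inr hadj, by omega⟩

lemma Connected.dist_apply_le_of_eq_or_adj (hG : G.Connected) (hG' : G'.Connected) {f : V → W}
    (hf : ∀ x y, G.Adj x y → f x = f y ∨ G'.Adj (f x) (f y)) (u v : V) :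
    G'.dist (f u) (f v) ≤ G.dist u v := by
  obtain ⟨p, hp⟩ := hG.exists_walk_length_eq_dist u v
  rw [← hp]
  clear hp
  induction p with
  | nil => simp
  | @cons x y z hadj q ih =>
    have := hG'.dist_triangle (u := f x) (v := f y) (w := f z)
    have := dist_le_one_of_eq_or_adj (hf x y hadj)
    rw [Walk.length_cons]
    omega

end SimpleGraph

section Resolving

variable {G : SimpleGraph α}

lemma MaximallyDistantFrom.eq_of_dist_eq_add (hG : G.Connected) {a b c : α}
    (hb : MaximallyDistantFrom G b a) (h : G.dist c a = G.dist c b + G.dist b a) : c = b := by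
  by_contra hcb
  obtain ⟨b', hadj, hb'⟩ := hG.exists_adj_dist_add_one_eq (Ne.symm hcb)
  have := hb b' hadj
  have := hG.dist_triangle (u := c) (v := b') (w := a)
  have := hG.pos_dist_of_ne hcb
  have := G.dist_comm (u := c) (v := b')
  have := G.dist_comm (u := b') (v := a)
  have := G.dist_comm (u := b) (v := c)
  omega

lemma MutuallyMaximallyDistant.eq_or_eq_of_stronglyResolves (hG : G.Connected) {u v w : α}
    (huv : MutuallyMaximallyDistant G u v) (hw : StronglyResolves G w u v) : w = u ∨ w = v :=
  (hw.imp (huv.2.eq_of_dist_eq_add hG) (huv.1.eq_of_dist_eq_add hG)).symm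

lemma exists_maximallyDistantFrom_dist_eq_add [Finite α] (hG : G.Connected) (x y : α) :
    ∃ u, MaximallyDistantFrom G u y ∧ G.dist u y = G.dist u x + G.dist x y := by
  obtain ⟨u, hu : G.dist u y = _, hmax⟩ :=
    Set.exists_max_image {u | G.dist u y = G.dist u x + G.dist x y} (G.dist · y)
      (Set.toFinite _) ⟨x, by simp⟩
  refine ⟨u, fun w hadj => ?_, hu⟩
  by_contra! hfar
  have := hG.dist_triangle (u := w) (v := u) (w := x)
  have := hG.dist_triangle (u := w) (v := x) (w := y)
  have := hG.dist_triangle (u := w) (v := u) (w := y)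
  have := dist_le_one_of_eq_or_adj (Or.inr hadj.symm)
  have := G.dist_comm (u := y) (v := w)
  have := hmax w (show G.dist w y = G.dist w x + G.dist x y by omega)
  omega

lemma exists_mutuallyMaximallyDistant_stronglyResolves [Finite α] (hG : G.Connected) {x y : α}
    (hxy : x ≠ y) : ∃ u v, u ≠ v ∧ MutuallyMaximallyDistant G u v ∧
      StronglyResolves G u x y ∧ StronglyResolves G v x y := by
  obtain ⟨u, hu, hux⟩ := exists_maximallyDistantFrom_dist_eq_add hG x y
  obtain ⟨v, hv, hvy⟩ := exists_maximallyDistantFrom_dist_eq_add hG y u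
  have := hG.pos_dist_of_ne hxy
  have := hG.dist_triangle (u := v) (v := x) (w := u)
  have := hG.dist_triangle (u := v) (v := y) (w := x)
  have := G.dist_comm (u := x) (v := y)
  have := G.dist_comm (u := x) (v := u)
  have := G.dist_comm (u := y) (v := u)
  refine ⟨u, v, ?_, ⟨fun w hadj => ?_, hv⟩, Or.inr hux, Or.inl (by omega)⟩
  · rintro rfl
    rw [dist_self] at hvy
    omega
  · have := hu w hadj
    have := hG.dist_triangle (u := v) (v := y) (w := w)
    have := G.dist_comm (u := y) (v := w)
    have := G.dist_comm (u := u) (v := v)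
    omega

lemma isStrongMetricGenerator_univ [Fintype α] (G : SimpleGraph α) :
    IsStrongMetricGenerator G univ :=
  fun u _ _ => ⟨u, mem_univ u, Or.inr (by simp)⟩

lemma sdim_le_card [Fintype α] {s : Finset α} (hs : IsStrongMetricGenerator G s) :
    sdim G ≤ s.card :=
  Nat.sInf_le ⟨s, hs, rfl⟩

lemma exists_isStrongMetricGenerator_card_eq_sdim [Fintype α] (G : SimpleGraph α) :
    ∃ s, IsStrongMetricGenerator G s ∧ s.card = sdim G := by
  have hne : {n | ∃ s : Finset α, IsStrongMetricGenerator G s ∧ s.card = n}.Nonempty :=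
    ⟨_, univ, isStrongMetricGenerator_univ G, rfl⟩
  exact Nat.sInf_mem hne

end Resolving

section StrongProd

variable {G : SimpleGraph α} {H : SimpleGraph β}

lemma eq_or_strongProd_adj_iff {x y : α × β} :
    x = y ∨ (strongProd G H).Adj x y ↔
      (x.1 = y.1 ∨ G.Adj x.1 y.1) ∧ (x.2 = y.2 ∨ H.Adj x.2 y.2) := by
  constructor
  · rintro (rfl | ⟨-, h⟩)
    · simp
    · exact h
  · intro h
    by_cases hxy : x = y
    exacts [Or.inl hxy, Or.inr ⟨hxy, h⟩]

lemma boxProd_le_strongProd : G.boxProd H ≤ strongProd G H := by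
  intro x y h
  refine ⟨(G.boxProd H).ne_of_adj h, ?_⟩
  rcases h with ⟨h₁, h₂⟩ | ⟨h₂, h₁⟩
  exacts [⟨Or.inr h₁, Or.inl h₂⟩, ⟨Or.inl h₁, Or.inr h₂⟩]

lemma SimpleGraph.Connected.strongProd (hG : G.Connected) (hH : H.Connected) :
    (strongProd G H).Connected :=
  (hG.boxProd hH).mono boxProd_le_strongProd

lemma strongProd_dist_le (hG : G.Connected) (hH : H.Connected) {n : ℕ} {x y : α × β}
    (h₁ : G.dist x.1 y.1 ≤ n) (h₂ : H.dist x.2 y.2 ≤ n) : (strongProd G H).dist x y ≤ n := by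
  induction n generalizing x with
  | zero =>
    have hx : x = y :=
      Prod.ext (hG.dist_eq_zero_iff.1 (by omega)) (hH.dist_eq_zero_iff.1 (by omega))
    simp [hx]
  | succ n ih =>
    obtain ⟨a, ha, hda⟩ := hG.exists_eq_or_adj_dist_eq_sub_one x.1 y.1
    obtain ⟨b, hb, hdb⟩ := hH.exists_eq_or_adj_dist_eq_sub_one x.2 y.2
    have := (hG.strongProd hH).dist_triangle (u := x) (v := (a, b)) (w := y)
    have := dist_le_one_of_eq_or_adj (eq_or_strongProd_adj_iff (y := (a, b)).2 ⟨ha, hb⟩)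
    have := ih (x := (a, b)) (by dsimp only; omega) (by dsimp only; omega)
    omega

lemma strongProd_dist (hG : G.Connected) (hH : H.Connected) (x y : α × β) :
    (strongProd G H).dist x y = max (G.dist x.1 y.1) (H.dist x.2 y.2) :=
  le_antisymm (strongProd_dist_le hG hH (le_max_left ..) (le_max_right ..)) <| max_le
    ((hG.strongProd hH).dist_apply_le_of_eq_or_adj hG (f := Prod.fst)
      (fun _ _ h => (eq_or_strongProd_adj_iff.1 (Or.inr h)).1) x y)
    ((hG.strongProd hH).dist_apply_le_of_eq_or_adj hH (f := Prod.snd)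
      (fun _ _ h => (eq_or_strongProd_adj_iff.1 (Or.inr h)).2) x y)

lemma strongProd_dist_swap (hG : G.Connected) (hH : H.Connected) (x y : α × β) :
    (strongProd H G).dist x.swap y.swap = (strongProd G H).dist x y := by
  rw [strongProd_dist hH hG, strongProd_dist hG hH, max_comm]
  rfl

lemma MaximallyDistantFrom.strongProd (hG : G.Connected) (hH : H.Connected) {u v : α}
    (huv : u ≠ v) (h : MaximallyDistantFrom G u v) (b : β) :
    MaximallyDistantFrom (strongProd G H) (u, b) (v, b) := by
  rintro ⟨w, z⟩ hadj
  obtain ⟨hw, hz⟩ := eq_or_strongProd_adj_iff.1 (Or.inr hadj)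
  simp only [strongProd_dist hG hH, dist_self, zero_le, max_eq_left] at hw hz ⊢
  refine max_le ?_ ((dist_le_one_of_eq_or_adj hz).trans (hG.pos_dist_of_ne huv))
  rcases hw with rfl | hw
  exacts [(dist_comm ..).le, h w hw]

lemma MutuallyMaximallyDistant.strongProd (hG : G.Connected) (hH : H.Connected) {u v : α}
    (huv : u ≠ v) (h : MutuallyMaximallyDistant G u v) (b : β) :
    MutuallyMaximallyDistant (strongProd G H) (u, b) (v, b) :=
  ⟨h.1.strongProd hG hH huv b, h.2.strongProd hG hH huv.symm b⟩

lemma IsStrongMetricGenerator.image_fst_filter_snd_eq [Finite α] [DecidableEq α] [DecidableEq β]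
    (hG : G.Connected) (hH : H.Connected) {W : Finset (α × β)}
    (hW : IsStrongMetricGenerator (strongProd G H) W) (b : β) :
    IsStrongMetricGenerator G (image Prod.fst {p ∈ W | p.2 = b}) := by
  intro x y hxy
  obtain ⟨u, v, huv, hmmd, hu, hv⟩ := exists_mutuallyMaximallyDistant_stronglyResolves hG hxy
  obtain ⟨w, hwW, hw⟩ := hW (u, b) (v, b) (by simp [huv])
  have mem_fiber : ∀ a, (a, b) ∈ W → a ∈ image Prod.fst {p ∈ W | p.2 = b} :=
    fun a ha => mem_image.2 ⟨(a, b), mem_filter.2 ⟨ha, rfl⟩, rfl⟩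
  rcases (hmmd.strongProd hG hH huv b).eq_or_eq_of_stronglyResolves (hG.strongProd hH) hw
    with rfl | rfl
  exacts [⟨u, mem_fiber u hwW, hu⟩, ⟨v, mem_fiber v hwW, hv⟩]

lemma IsStrongMetricGenerator.card_mul_sdim_le_card [Fintype α] [Fintype β]
    (hG : G.Connected) (hH : H.Connected) {W : Finset (α × β)}
    (hW : IsStrongMetricGenerator (strongProd G H) W) :
    Fintype.card β * sdim G ≤ W.card := by
  classical
  calc Fintype.card β * sdim G = ∑ _b : β, sdim G := by simp [mul_comm]
    _ ≤ ∑ b : β, {p ∈ W | p.2 = b}.card := sum_le_sum fun b _ =>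
        (sdim_le_card (hW.image_fst_filter_snd_eq hG hH b)).trans card_image_le
    _ = W.card := (card_eq_sum_card_fiberwise fun x _ => mem_univ x.2).symm

lemma IsStrongMetricGenerator.map_prodComm (hG : G.Connected) (hH : H.Connected)
    {W : Finset (α × β)} (hW : IsStrongMetricGenerator (strongProd G H) W) :
    IsStrongMetricGenerator (strongProd H G) (W.map (Equiv.prodComm α β).toEmbedding) := by
  intro x y hxy
  obtain ⟨w, hwW, hw⟩ := hW x.swap y.swap (by simpa using hxy)
  refine ⟨w.swap, mem_map_equiv.2 (by simpa using hwW), ?_⟩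
  simpa only [StronglyResolves, ← strongProd_dist_swap hH hG, Prod.swap_swap] using hw

end StrongProd

theorem sdim_strongProd_lower_bound_general [Fintype α] [Fintype β]
    (G : SimpleGraph α) (H : SimpleGraph β)
    (hG : G.Connected) (hH : H.Connected) :
    sdim (strongProd G H) ≥
      max (Fintype.card β * sdim G) (Fintype.card α * sdim H) := by
  obtain ⟨W, hW, hcard⟩ := exists_isStrongMetricGenerator_card_eq_sdim (strongProd G H)
  rw [← hcard]
  refine max_le (hW.card_mul_sdim_le_card hG hH) ?_
  simpa using (hW.map_prodComm hG hH).card_mul_sdim_le_card hH hG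

theorem sdim_strongProd_lower_bound [Fintype α] [Fintype β]
    (G : SimpleGraph α) (H : SimpleGraph β)
    (hG : G.Connected) (hGn : Nontrivial α) (hH : H.Connected) (hHn : Nontrivial β) :
    sdim (strongProd G H) ≥
      max (Fintype.card β * sdim G) (Fintype.card α * sdim H) :=
  sdim_strongProd_lower_bound_general G H hG hH
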